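/- arXiv:2504.10614 — 3 statements merged into one kernel-verified Lean document; each statement's English description precedes it below -/
import Mathlib

section
/- Let C be an (n-1)×(n-1) Hermitian matrix and Υ a Hermitian matrix with all eigenvalues in the closed interval [ε₁, 1-ε₂], where 0 < ε₁ and 0 < ε₂ < 1. Write the eigenvalues μ₁ ≤ ⋯ ≤ μ_{n-1} of C and let σ⁻ = -Σ_{μ_j<0} μ_j and σ⁺ = Σ_{μ_j≥0} μ_j. Then Tr(ΥC) ≥ -σ⁻ + ε(σ⁺ + σ⁻), where ε = min(ε₁, ε₂). -/
open Matrix Finset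

/-- `μ` is the monotone (increasing) enumeration of the eigenvalues of the
Hermitian matrix `C`, witnessed by a unitary diagonalization. -/
def IsSortedSpectrum {m : ℕ} (C : Matrix (Fin m) (Fin m) ℂ) (μ : Fin m → ℝ) : Prop :=
  Monotone μ ∧ ∃ A ∈ Matrix.unitaryGroup (Fin m) ℂ,
    C = Aᴴ * Matrix.diagonal (fun i => (μ i : ℂ)) * A

/-- If `C` is Hermitian with eigenvalues `μ₁ ≤ ⋯ ≤ μ_m`, `Υ` is Hermitian with all
eigenvalues in `[ε₁, 1 - ε₂]` (`0 < ε₁`, `0 < ε₂ < 1`), `σ⁻ = -∑_{μ_j < 0} μ_j` and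
`σ⁺ = ∑_{μ_j ≥ 0} μ_j`, then `Tr(ΥC) ≥ -σ⁻ + ε (σ⁺ + σ⁻)` with `ε = min ε₁ ε₂`. -/
theorem trace_mul_ge_of_spectrum_in_interval {m : ℕ}
    (C Υ : Matrix (Fin m) (Fin m) ℂ) (μ ν : Fin m → ℝ)
    (hC : IsSortedSpectrum C μ) (hΥ : IsSortedSpectrum Υ ν)
    (ε₁ ε₂ : ℝ) (hε₁ : 0 < ε₁) (hε₂ : 0 < ε₂) (hε₂' : ε₂ < 1)
    (hν : ∀ i, ν i ∈ Set.Icc ε₁ (1 - ε₂)) :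
    (Υ * C).trace.re ≥
      -(∑ j ∈ Finset.univ.filter (fun j : Fin m => μ j < 0), -μ j) +
        min ε₁ ε₂ * ((∑ j ∈ Finset.univ.filter (fun j : Fin m => 0 ≤ μ j), μ j) +
          (∑ j ∈ Finset.univ.filter (fun j : Fin m => μ j < 0), -μ j)) := by
  obtain ⟨hμmono, A, hA, hCeq⟩ := hC
  obtain ⟨hνmono, B, hB, hΥeq⟩ := hΥ
  set U : Matrix (Fin m) (Fin m) ℂ := B * Aᴴ with hUdef
  have hAstar : Aᴴ ∈ Matrix.unitaryGroup (Fin m) ℂ := by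
    simpa [Matrix.star_eq_conjTranspose] using Unitary.star_mem hA
  have hUunit : U ∈ Matrix.unitaryGroup (Fin m) ℂ := mul_mem hB hAstar
  have hUU : Uᴴ * U = 1 := by
    simpa [Matrix.star_eq_conjTranspose] using hUunit.1
  -- columns of U have unit norm
  have hcol : ∀ j, ∑ i, Complex.normSq (U i j) = 1 := by
    intro j
    have h1 : (Uᴴ * U) j j = 1 := by rw [hUU]; simp
    rw [Matrix.mul_apply] at h1
    have h2 : (((∑ i, Complex.normSq (U i j) : ℝ)) : ℂ) = 1 := by
      rw [Complex.ofReal_sum]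
      rw [← h1]
      exact Finset.sum_congr rfl fun i _ => by
        rw [Matrix.conjTranspose_apply, Complex.normSq_eq_conj_mul_self]
        rfl
    exact_mod_cast h2
  -- the trace identity
  set Dν : Matrix (Fin m) (Fin m) ℂ := Matrix.diagonal (fun i => (ν i : ℂ)) with hDν
  set Dμ : Matrix (Fin m) (Fin m) ℂ := Matrix.diagonal (fun i => (μ i : ℂ)) with hDμ
  set d : Fin m → ℝ := fun j => ∑ i, ν i * Complex.normSq (U i j) with hd
  have htr : (Υ * C).trace = ((Uᴴ * Dν * U) * Dμ).trace := by
    rw [hCeq, hΥeq]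
    have e1 : Bᴴ * Dν * B * (Aᴴ * Dμ * A) = Bᴴ * Dν * B * Aᴴ * Dμ * A := by
      simp only [Matrix.mul_assoc]
    rw [e1, Matrix.trace_mul_comm]
    congr 1
    simp only [hUdef, Matrix.conjTranspose_mul, Matrix.conjTranspose_conjTranspose,
      Matrix.mul_assoc]
  have htr2 : (Υ * C).trace = ((∑ j, μ j * d j : ℝ) : ℂ) := by
    rw [htr]
    rw [Complex.ofReal_sum, hDν, hDμ]
    simp only [Matrix.trace, Matrix.diag_apply, Matrix.mul_diagonal]
    refine Finset.sum_congr rfl fun j _ => ?_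
    rw [Matrix.mul_apply]
    push_cast [hd, Finset.mul_sum]
    rw [Finset.sum_mul]
    refine Finset.sum_congr rfl fun i _ => ?_
    rw [Matrix.mul_diagonal, Matrix.conjTranspose_apply, Complex.normSq_eq_conj_mul_self]
    simp only [Complex.star_def]
    ring
  have hre : (Υ * C).trace.re = ∑ j, μ j * d j := by rw [htr2, Complex.ofReal_re]
  -- bounds on d
  have hd1 : ∀ j, ε₁ ≤ d j := by
    intro j
    calc ε₁ = ∑ i, ε₁ * Complex.normSq (U i j) := by rw [← Finset.mul_sum, hcol j, mul_one]
    _ ≤ d j := Finset.sum_le_sum fun i _ =>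
        mul_le_mul_of_nonneg_right (hν i).1 (Complex.normSq_nonneg _)
  have hd2 : ∀ j, d j ≤ 1 - ε₂ := by
    intro j
    calc d j ≤ ∑ i, (1 - ε₂) * Complex.normSq (U i j) := Finset.sum_le_sum fun i _ =>
        mul_le_mul_of_nonneg_right (hν i).2 (Complex.normSq_nonneg _)
    _ = 1 - ε₂ := by rw [← Finset.mul_sum, hcol j, mul_one]
  set ε := min ε₁ ε₂ with hεdef
  have hεle1 : ε ≤ ε₁ := min_le_left _ _
  have hεle2 : ε ≤ ε₂ := min_le_right _ _
  rw [ge_iff_le, hre]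
  have hsplit : (∑ j, μ j * d j) =
      (∑ j ∈ Finset.univ.filter (fun j : Fin m => 0 ≤ μ j), μ j * d j) +
      (∑ j ∈ Finset.univ.filter (fun j : Fin m => μ j < 0), μ j * d j) := by
    rw [← Finset.sum_filter_add_sum_filter_not Finset.univ (fun j => 0 ≤ μ j)]
    congr 1
    apply Finset.sum_congr _ fun _ _ => rfl
    ext j; simp [not_le]
  have hP : ∀ j ∈ Finset.univ.filter (fun j : Fin m => 0 ≤ μ j), ε * μ j ≤ μ j * d j := by
    intro j hj
    rw [Finset.mem_filter] at hj
    calc ε * μ j ≤ d j * μ j :=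
          mul_le_mul_of_nonneg_right (le_trans hεle1 (hd1 j)) hj.2
    _ = μ j * d j := mul_comm _ _
  have hN : ∀ j ∈ Finset.univ.filter (fun j : Fin m => μ j < 0), (1 - ε) * μ j ≤ μ j * d j := by
    intro j hj
    rw [Finset.mem_filter] at hj
    have : d j ≤ 1 - ε := le_trans (hd2 j) (by linarith)
    calc (1 - ε) * μ j = μ j * (1 - ε) := mul_comm _ _
    _ ≤ μ j * d j := mul_le_mul_of_nonpos_left this (le_of_lt hj.2)
  have h1 : ∑ j ∈ Finset.univ.filter (fun j : Fin m => 0 ≤ μ j), ε * μ j ≤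
      ∑ j ∈ Finset.univ.filter (fun j : Fin m => 0 ≤ μ j), μ j * d j := Finset.sum_le_sum hP
  have h2 : ∑ j ∈ Finset.univ.filter (fun j : Fin m => μ j < 0), (1 - ε) * μ j ≤
      ∑ j ∈ Finset.univ.filter (fun j : Fin m => μ j < 0), μ j * d j := Finset.sum_le_sum hN
  rw [hsplit]
  have e1 : ∑ j ∈ Finset.univ.filter (fun j : Fin m => 0 ≤ μ j), ε * μ j =
      ε * ∑ j ∈ Finset.univ.filter (fun j : Fin m => 0 ≤ μ j), μ j := by rw [Finset.mul_sum]
  have e2 : ∑ j ∈ Finset.univ.filter (fun j : Fin m => μ j < 0), (1 - ε) * μ j =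
      (1 - ε) * ∑ j ∈ Finset.univ.filter (fun j : Fin m => μ j < 0), μ j := by rw [Finset.mul_sum]
  have e3 : ∑ j ∈ Finset.univ.filter (fun j : Fin m => μ j < 0), -μ j =
      -∑ j ∈ Finset.univ.filter (fun j : Fin m => μ j < 0), μ j := by rw [Finset.sum_neg_distrib]
  rw [e3]
  rw [e1] at h1; rw [e2] at h2
  nlinarith [h1, h2]
end

section
/- Let C be an (n-1)×(n-1) Hermitian matrix with eigenvalues μ₁ ≤ ⋯ ≤ μ_{n-1}. The condition Y(q) — that C has at least n-q positive or at least q+1 negative eigenvalues, and at least q+1 positive or at least n-q negative eigenvalues — holds if and only if every sum of q eigenvalues σ satisfies -σ⁻ < σ < σ⁺, where σ⁺ = Σ_{μ_j>0} μ_j and σ⁻ = -Σ_{μ_j<0} μ_j. -/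
open Matrix Finset

lemma key_trace_aux {m q : ℕ} (hq : q ≤ m) (f : Fin m → ℝ) :
    (∀ S : Finset (Fin m), S.card = q →
      ∑ j ∈ S, f j < ∑ j ∈ Finset.univ.filter (fun j : Fin m => 0 < f j), f j) ↔
    (q + 1 ≤ (Finset.univ.filter (fun j : Fin m => 0 < f j)).card ∨
      m + 1 - q ≤ (Finset.univ.filter (fun j : Fin m => f j < 0)).card) := by
  set P := Finset.univ.filter (fun j : Fin m => 0 < f j) with hP
  set N := Finset.univ.filter (fun j : Fin m => f j < 0) with hN
  constructor
  · intro h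
    by_contra hc
    push_neg at hc
    obtain ⟨h1, h2⟩ := hc
    have hp : P.card ≤ q := by omega
    have hν : N.card ≤ m - q := by omega
    have hPN : P ⊆ Nᶜ := by
      intro j hj
      simp only [hP, hN, Finset.mem_filter, Finset.mem_compl, Finset.mem_univ,
        true_and] at *
      linarith
    have hcard : q ≤ Nᶜ.card := by
      rw [Finset.card_compl, Fintype.card_fin]; omega
    obtain ⟨S, hPS, hSN, hScard⟩ := Finset.exists_subsuperset_card_eq hPN hp hcard
    have hzero : ∀ j ∈ S \ P, f j = 0 := by
      intro j hj
      have hj1 := (Finset.mem_sdiff.mp hj).1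
      have hj2 := (Finset.mem_sdiff.mp hj).2
      have hjN := hSN hj1
      simp only [hP, hN, Finset.mem_filter, Finset.mem_compl, Finset.mem_univ,
        true_and, not_lt] at hj2 hjN
      linarith
    have hsum : ∑ j ∈ S, f j = ∑ j ∈ P, f j := by
      rw [← Finset.sum_sdiff hPS, Finset.sum_eq_zero hzero, zero_add]
    have := h S hScard
    rw [hsum] at this
    exact lt_irrefl _ this
  · intro h S hS
    have hsplit : ∑ j ∈ S ∩ P, f j + ∑ j ∈ S \ P, f j = ∑ j ∈ S, f j :=
      Finset.sum_inter_add_sum_sdiff S P f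
    have hsplit' : ∑ j ∈ P ∩ S, f j + ∑ j ∈ P \ S, f j = ∑ j ∈ P, f j :=
      Finset.sum_inter_add_sum_sdiff P S f
    have hcomm : ∑ j ∈ S ∩ P, f j = ∑ j ∈ P ∩ S, f j := by rw [Finset.inter_comm]
    have hSP_nonpos : ∀ j ∈ S \ P, f j ≤ 0 := by
      intro j hj
      have := (Finset.mem_sdiff.mp hj).2
      simp only [hP, Finset.mem_filter, Finset.mem_univ, true_and, not_lt] at this
      linarith
    have hPS_nonneg : 0 ≤ ∑ j ∈ P \ S, f j := by
      apply Finset.sum_nonneg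
      intro j hj
      have := (Finset.mem_sdiff.mp hj).1
      simp only [hP, Finset.mem_filter, Finset.mem_univ, true_and] at this
      linarith
    rcases h with h | h
    · have hne : (P \ S).Nonempty := by
        rw [Finset.sdiff_nonempty]
        intro hsub
        have := Finset.card_le_card hsub
        omega
      have h1 : 0 < ∑ j ∈ P \ S, f j := by
        apply Finset.sum_pos _ hne
        intro j hj
        have := (Finset.mem_sdiff.mp hj).1
        simp only [hP, Finset.mem_filter, Finset.mem_univ, true_and] at this
        exact this
      have h2 : ∑ j ∈ S \ P, f j ≤ 0 := Finset.sum_nonpos hSP_nonpos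
      linarith
    · have hne : (S ∩ N).Nonempty := by
        rw [← Finset.card_pos]
        have hiu := Finset.card_inter_add_card_union S N
        have hle : (S ∪ N).card ≤ m := by
          have := Finset.card_le_univ (S ∪ N)
          simpa using this
        omega
      obtain ⟨j, hj⟩ := hne
      have hjS := (Finset.mem_inter.mp hj).1
      have hjN := (Finset.mem_inter.mp hj).2
      have hjneg : f j < 0 := by
        simpa [hN] using hjN
      have hjSP : j ∈ S \ P := by
        rw [Finset.mem_sdiff]
        refine ⟨hjS, ?_⟩
        simp only [hP, Finset.mem_filter, Finset.mem_univ, true_and, not_lt]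
        linarith
      have h2 : ∑ j ∈ S \ P, f j < 0 := by
        calc ∑ j ∈ S \ P, f j < ∑ _j ∈ S \ P, (0 : ℝ) :=
              Finset.sum_lt_sum hSP_nonpos ⟨j, hjSP, hjneg⟩
          _ = 0 := by simp
      linarith

/-- Condition `Y(q)` — the Hermitian matrix `C` (of size `m = n - 1`) has at least
`n - q = m + 1 - q` positive or at least `q + 1` negative eigenvalues, and at least
`q + 1` positive or at least `n - q` negative eigenvalues — holds iff every sum `σ` of
`q` eigenvalues satisfies `-σ⁻ < σ < σ⁺`, where `σ⁺` is the sum of the positive and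
`-σ⁻` the sum of the negative eigenvalues. -/
theorem Yq_iff_strict_trace_comparability {m : ℕ}
    (C : Matrix (Fin m) (Fin m) ℂ) (μ : Fin m → ℝ) (hC : IsSortedSpectrum C μ)
    (q : ℕ) (hq1 : 1 ≤ q) (hqm : q < m) :
    ((m + 1 - q ≤ (Finset.univ.filter (fun j : Fin m => 0 < μ j)).card ∨
        q + 1 ≤ (Finset.univ.filter (fun j : Fin m => μ j < 0)).card) ∧
      (q + 1 ≤ (Finset.univ.filter (fun j : Fin m => 0 < μ j)).card ∨
        m + 1 - q ≤ (Finset.univ.filter (fun j : Fin m => μ j < 0)).card)) ↔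
    (∀ S : Finset (Fin m), S.card = q →
      -(∑ j ∈ Finset.univ.filter (fun j : Fin m => μ j < 0), -μ j) < (∑ j ∈ S, μ j) ∧
        (∑ j ∈ S, μ j) < ∑ j ∈ Finset.univ.filter (fun j : Fin m => 0 < μ j), μ j) := by
  have hq : q ≤ m := le_of_lt hqm
  have key₁ := key_trace_aux hq μ
  have key₂ := key_trace_aux hq (fun j => -μ j)
  have e1 : (Finset.univ.filter (fun j : Fin m => 0 < (fun j => -μ j) j)) =
      Finset.univ.filter (fun j : Fin m => μ j < 0) := by
    ext j; simp [neg_pos]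
  have e2 : (Finset.univ.filter (fun j : Fin m => (fun j => -μ j) j < 0)) =
      Finset.univ.filter (fun j : Fin m => 0 < μ j) := by
    ext j; simp
  rw [e1, e2] at key₂
  constructor
  · rintro ⟨h1, h2⟩ S hS
    refine ⟨?_, key₁.mpr h2 S hS⟩
    have := key₂.mpr h1.symm S hS
    simp only [Finset.sum_neg_distrib] at this ⊢
    linarith
  · intro h
    constructor
    · refine (key₂.mp ?_).symm
      intro S hS
      have := (h S hS).1
      simp only [Finset.sum_neg_distrib] at this ⊢
      linarith
    · exact key₁.mp fun S hS => (h S hS).2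
end

section
/- Let C be an (n-1)×(n-1) Hermitian matrix and 1 ≤ q ≤ n-1. Suppose there exist Hermitian matrices Υ₁ and Υ₂, each with all eigenvalues in the open interval (0,1), such that σ_q(C) ≥ Tr(Υ₁C) and σ_{n-1-q}(C) ≥ Tr(Υ₂C), where σ_k(C) denotes the sum of the k smallest eigenvalues of C. Then there exists ε ∈ (0,1) such that -σ⁻ + ε(σ⁺+σ⁻) ≤ σ ≤ σ⁺ - ε(σ⁺+σ⁻) for every sum σ of q eigenvalues of C, where σ⁺ (resp. σ⁻) is the sum of positive eigenvalues (resp. minus the sum of negative eigenvalues) of C. -/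
open Matrix Finset

lemma sorted_sum_le_aux {m q : ℕ} (μ : Fin m → ℝ) (hμ : Monotone μ) (hqm : q ≤ m)
    (S : Finset (Fin m)) (hS : S.card = q) :
    ∑ j ∈ Finset.univ.filter (fun j : Fin m => (j : ℕ) < q), μ j ≤ ∑ j ∈ S, μ j := by
  set f := S.orderEmbOfFin hS with hf
  have hkey : ∀ k : ℕ, ∀ h : k < q, k ≤ ((f ⟨k, h⟩ : Fin m) : ℕ) := by
    intro k
    induction k with
    | zero => intro h; exact Nat.zero_le _
    | succ k ih =>
      intro h
      have h1 : k < q := Nat.lt_of_succ_lt h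
      have h2 := ih h1
      have h3 : f ⟨k, h1⟩ < f ⟨k + 1, h⟩ := by
        apply f.strictMono
        simp [Fin.lt_def]
      rw [Fin.lt_def] at h3
      omega
  have hS_sum : ∑ j ∈ S, μ j = ∑ i : Fin q, μ (f i) := by
    rw [eq_comm]
    apply Finset.sum_bij (fun i _ => f i)
    · intro i _; exact S.orderEmbOfFin_mem hS i
    · intro i _ j _ hij; exact f.injective hij
    · intro j hj
      have : j ∈ Set.range f := by
        rw [hf, S.range_orderEmbOfFin hS]; exact hj
      obtain ⟨i, hi⟩ := this
      exact ⟨i, Finset.mem_univ i, hi⟩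
    · intro i _; rfl
  have hF_sum : ∑ j ∈ Finset.univ.filter (fun j : Fin m => (j : ℕ) < q), μ j
      = ∑ i : Fin q, μ (Fin.castLE hqm i) := by
    rw [eq_comm]
    apply Finset.sum_bij (fun (i : Fin q) _ => Fin.castLE hqm i)
    · intro i _; simp [Fin.castLE]
    · intro i _ j _ hij
      exact Fin.castLE_injective hqm hij
    · intro j hj
      simp only [Finset.mem_filter] at hj
      exact ⟨⟨(j : ℕ), hj.2⟩, Finset.mem_univ _, rfl⟩
    · intro i _; rfl
  rw [hS_sum, hF_sum]
  apply Finset.sum_le_sum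
  intro i _
  apply hμ
  rw [Fin.le_def]
  simpa using hkey i i.2

lemma diag_conj_diagonal_re {m : ℕ} (lam : Fin m → ℝ) (W : Matrix (Fin m) (Fin m) ℂ)
    (hW : W ∈ Matrix.unitaryGroup (Fin m) ℂ) (i : Fin m) {a b : ℝ}
    (ha : ∀ k, a ≤ lam k) (hb : ∀ k, lam k ≤ b) :
    a ≤ ((W * Matrix.diagonal (fun k => (lam k : ℂ)) * Wᴴ) i i).re ∧
      ((W * Matrix.diagonal (fun k => (lam k : ℂ)) * Wᴴ) i i).re ≤ b := by
  have hentry : ((W * Matrix.diagonal (fun k => (lam k : ℂ)) * Wᴴ) i i).re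
      = ∑ k, lam k * Complex.normSq (W i k) := by
    rw [Matrix.mul_apply]
    rw [Complex.re_sum]
    congr 1
    ext k
    rw [Matrix.mul_diagonal, Matrix.conjTranspose_apply]
    have : W i k * (lam k : ℂ) * star (W i k)
        = (lam k : ℂ) * ((Complex.normSq (W i k) : ℝ) : ℂ) := by
      rw [← Complex.mul_conj]
      ring_nf
      rfl
    rw [this, ← Complex.ofReal_mul, Complex.ofReal_re]
  have hnorm : ∑ k, Complex.normSq (W i k) = 1 := by
    have h1 : W * Wᴴ = 1 := by
      have := (Matrix.mem_unitaryGroup_iff).mp hW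
      rwa [Matrix.star_eq_conjTranspose] at this
    have h2 : (W * Wᴴ) i i = 1 := by rw [h1]; simp
    rw [Matrix.mul_apply] at h2
    have h3 : ∑ k, W i k * Wᴴ k i = ((∑ k, Complex.normSq (W i k) : ℝ) : ℂ) := by
      rw [Complex.ofReal_sum]
      congr 1; ext k
      rw [Matrix.conjTranspose_apply, ← Complex.mul_conj]
      rfl
    rw [h3] at h2
    exact_mod_cast h2
  rw [hentry]
  constructor
  · calc a = ∑ k, a * Complex.normSq (W i k) := by
          rw [← Finset.mul_sum, hnorm, mul_one]
      _ ≤ ∑ k, lam k * Complex.normSq (W i k) :=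
          Finset.sum_le_sum fun k _ =>
            mul_le_mul_of_nonneg_right (ha k) (Complex.normSq_nonneg _)
  · calc ∑ k, lam k * Complex.normSq (W i k)
        ≤ ∑ k, b * Complex.normSq (W i k) :=
          Finset.sum_le_sum fun k _ =>
            mul_le_mul_of_nonneg_right (hb k) (Complex.normSq_nonneg _)
      _ = b := by rw [← Finset.mul_sum, hnorm, mul_one]

lemma diag_conj_re_bounds {m : ℕ} (Υ : Matrix (Fin m) (Fin m) ℂ) (hΥ : Υ.IsHermitian)
    (A : Matrix (Fin m) (Fin m) ℂ) (hA : A ∈ Matrix.unitaryGroup (Fin m) ℂ) (i : Fin m)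
    {a b : ℝ} (ha : ∀ k, a ≤ hΥ.eigenvalues k) (hb : ∀ k, hΥ.eigenvalues k ≤ b) :
    a ≤ ((A * Υ * Aᴴ) i i).re ∧ ((A * Υ * Aᴴ) i i).re ≤ b := by
  set V : Matrix (Fin m) (Fin m) ℂ :=
    (Matrix.IsHermitian.eigenvectorUnitary hΥ : Matrix (Fin m) (Fin m) ℂ) with hV
  have hVmem : V ∈ Matrix.unitaryGroup (Fin m) ℂ := (Matrix.IsHermitian.eigenvectorUnitary hΥ).2
  have hWmem : A * V ∈ Matrix.unitaryGroup (Fin m) ℂ := Submonoid.mul_mem _ hA hVmem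
  have hspec : Υ = V * Matrix.diagonal (fun k => (hΥ.eigenvalues k : ℂ)) * Vᴴ := by
    have := hΥ.spectral_theorem
    rw [← Matrix.star_eq_conjTranspose]
    convert this using 2
    rw [Unitary.conjStarAlgAut_apply]
    rfl
  have key : A * Υ * Aᴴ
      = (A * V) * Matrix.diagonal (fun k => (hΥ.eigenvalues k : ℂ)) * (A * V)ᴴ := by
    conv_lhs => rw [hspec]
    rw [Matrix.conjTranspose_mul]
    noncomm_ring
  rw [key]
  exact diag_conj_diagonal_re _ _ hWmem i ha hb

lemma weighted_sum_bounds {m : ℕ} (μ u : Fin m → ℝ) (ε : ℝ)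
    (hu1 : ∀ i, ε ≤ u i) (hu2 : ∀ i, u i ≤ 1 - ε) :
    ε * (∑ j ∈ Finset.univ.filter (fun j : Fin m => 0 < μ j), μ j)
        - (1 - ε) * (∑ j ∈ Finset.univ.filter (fun j : Fin m => μ j < 0), -μ j)
      ≤ ∑ i, u i * μ i ∧
    ∑ i, u i * μ i ≤ (1 - ε) * (∑ j ∈ Finset.univ.filter (fun j : Fin m => 0 < μ j), μ j)
        - ε * (∑ j ∈ Finset.univ.filter (fun j : Fin m => μ j < 0), -μ j) := by
  have hneg : ∑ j ∈ Finset.univ.filter (fun j : Fin m => ¬ 0 < μ j), μ j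
      = -(∑ j ∈ Finset.univ.filter (fun j : Fin m => μ j < 0), -μ j) := by
    rw [← Finset.sum_neg_distrib]
    simp only [neg_neg]
    apply (Finset.sum_subset _ _).symm
    · intro j hj
      simp only [Finset.mem_filter, Finset.mem_univ, true_and] at hj ⊢
      exact not_lt.mpr hj.le
    · intro j hj hj2
      simp only [Finset.mem_filter, Finset.mem_univ, true_and, not_lt] at hj hj2
      linarith
  constructor
  · calc ε * (∑ j ∈ Finset.univ.filter (fun j : Fin m => 0 < μ j), μ j)
          - (1 - ε) * (∑ j ∈ Finset.univ.filter (fun j : Fin m => μ j < 0), -μ j)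
        = ∑ i, (if 0 < μ i then ε * μ i else (1 - ε) * μ i) := by
          rw [Finset.sum_ite, ← Finset.mul_sum, ← Finset.mul_sum, hneg]
          ring
      _ ≤ ∑ i, u i * μ i := by
          apply Finset.sum_le_sum
          intro i _
          by_cases h : 0 < μ i
          · simp only [if_pos h]
            exact mul_le_mul_of_nonneg_right (hu1 i) h.le
          · simp only [if_neg h]
            exact mul_le_mul_of_nonpos_right (hu2 i) (not_lt.mp h)
  · calc ∑ i, u i * μ i
        ≤ ∑ i, (if 0 < μ i then (1 - ε) * μ i else ε * μ i) := by
          apply Finset.sum_le_sum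
          intro i _
          by_cases h : 0 < μ i
          · simp only [if_pos h]
            exact mul_le_mul_of_nonneg_right (hu2 i) h.le
          · simp only [if_neg h]
            exact mul_le_mul_of_nonpos_right (hu1 i) (not_lt.mp h)
      _ = (1 - ε) * (∑ j ∈ Finset.univ.filter (fun j : Fin m => 0 < μ j), μ j)
          - ε * (∑ j ∈ Finset.univ.filter (fun j : Fin m => μ j < 0), -μ j) := by
          rw [Finset.sum_ite, ← Finset.mul_sum, ← Finset.mul_sum, hneg]
          ring

lemma trace_re_eq_aux {m : ℕ} (Υ A : Matrix (Fin m) (Fin m) ℂ) (μ : Fin m → ℝ) :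
    (Υ * (Aᴴ * Matrix.diagonal (fun i => (μ i : ℂ)) * A)).trace.re
      = ∑ i, ((A * Υ * Aᴴ) i i).re * μ i := by
  have h1 : Υ * (Aᴴ * Matrix.diagonal (fun i => (μ i : ℂ)) * A)
      = (Υ * Aᴴ * Matrix.diagonal (fun i => (μ i : ℂ))) * A := by noncomm_ring
  rw [h1, Matrix.trace_mul_comm]
  have h2 : A * (Υ * Aᴴ * Matrix.diagonal (fun i => (μ i : ℂ)))
      = (A * Υ * Aᴴ) * Matrix.diagonal (fun i => (μ i : ℂ)) := by noncomm_ring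
  rw [h2, Matrix.trace, Complex.re_sum]
  congr 1
  ext i
  rw [Matrix.diag_apply, Matrix.mul_diagonal]
  simp [Complex.mul_re]

/-- Comparable weak `Y(q)` implies condition `D(q)` (pointwise version of Remark 2.6):
if there are Hermitian `Υ₁`, `Υ₂` with eigenvalues in `(0,1)` such that
`σ_q(C) ≥ Tr(Υ₁C)` and `σ_{m-q}(C) ≥ Tr(Υ₂C)`, then there is `ε ∈ (0,1)` with
`-σ⁻ + ε(σ⁺+σ⁻) ≤ σ ≤ σ⁺ - ε(σ⁺+σ⁻)` for every sum `σ` of `q` eigenvalues of `C`. -/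
theorem comparable_weak_Yq_implies_Dq {m : ℕ}
    (C : Matrix (Fin m) (Fin m) ℂ) (μ : Fin m → ℝ) (hC : IsSortedSpectrum C μ)
    (q : ℕ) (hq1 : 1 ≤ q) (hqm : q ≤ m)
    (Υ₁ Υ₂ : Matrix (Fin m) (Fin m) ℂ)
    (hΥ₁ : Υ₁.IsHermitian) (hΥ₂ : Υ₂.IsHermitian)
    (heig₁ : ∀ i, hΥ₁.eigenvalues i ∈ Set.Ioo (0 : ℝ) 1)
    (heig₂ : ∀ i, hΥ₂.eigenvalues i ∈ Set.Ioo (0 : ℝ) 1)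
    (hcomp₁ : (Υ₁ * C).trace.re ≤
      ∑ j ∈ Finset.univ.filter (fun j : Fin m => (j : ℕ) < q), μ j)
    (hcomp₂ : (Υ₂ * C).trace.re ≤
      ∑ j ∈ Finset.univ.filter (fun j : Fin m => (j : ℕ) < m - q), μ j) :
    ∃ ε : ℝ, 0 < ε ∧ ε < 1 ∧
      ∀ S : Finset (Fin m), S.card = q →
        -(∑ j ∈ Finset.univ.filter (fun j : Fin m => μ j < 0), -μ j) +
            ε * ((∑ j ∈ Finset.univ.filter (fun j : Fin m => 0 < μ j), μ j) +
              (∑ j ∈ Finset.univ.filter (fun j : Fin m => μ j < 0), -μ j)) ≤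
          (∑ j ∈ S, μ j) ∧
        (∑ j ∈ S, μ j) ≤
          (∑ j ∈ Finset.univ.filter (fun j : Fin m => 0 < μ j), μ j) -
            ε * ((∑ j ∈ Finset.univ.filter (fun j : Fin m => 0 < μ j), μ j) +
              (∑ j ∈ Finset.univ.filter (fun j : Fin m => μ j < 0), -μ j)) := by
  obtain ⟨hμmono, A, hAmem, hCeq⟩ := hC
  have hm : 0 < m := lt_of_lt_of_le hq1 hqm
  haveI : Nonempty (Fin m) := ⟨⟨0, hm⟩⟩
  have hne : (Finset.univ : Finset (Fin m)).Nonempty := Finset.univ_nonempty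
  set a₁ := Finset.univ.inf' hne hΥ₁.eigenvalues with ha₁def
  set b₁ := Finset.univ.sup' hne hΥ₁.eigenvalues with hb₁def
  set a₂ := Finset.univ.inf' hne hΥ₂.eigenvalues with ha₂def
  set b₂ := Finset.univ.sup' hne hΥ₂.eigenvalues with hb₂def
  have ha₁pos : 0 < a₁ := by
    obtain ⟨k, _, hk⟩ := Finset.exists_mem_eq_inf' hne hΥ₁.eigenvalues
    rw [ha₁def, hk]; exact (heig₁ k).1
  have ha₁lt : a₁ < 1 := by
    obtain ⟨k, _, hk⟩ := Finset.exists_mem_eq_inf' hne hΥ₁.eigenvalues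
    rw [ha₁def, hk]; exact (heig₁ k).2
  have hb₁lt : b₁ < 1 := by
    obtain ⟨k, _, hk⟩ := Finset.exists_mem_eq_sup' hne hΥ₁.eigenvalues
    rw [hb₁def, hk]; exact (heig₁ k).2
  have ha₂pos : 0 < a₂ := by
    obtain ⟨k, _, hk⟩ := Finset.exists_mem_eq_inf' hne hΥ₂.eigenvalues
    rw [ha₂def, hk]; exact (heig₂ k).1
  have hb₂lt : b₂ < 1 := by
    obtain ⟨k, _, hk⟩ := Finset.exists_mem_eq_sup' hne hΥ₂.eigenvalues
    rw [hb₂def, hk]; exact (heig₂ k).2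
  set ε := min (min a₁ (1 - b₁)) (min a₂ (1 - b₂)) with hεdef
  have hεa₁ : ε ≤ a₁ := le_trans (min_le_left _ _) (min_le_left _ _)
  have hεb₁ : ε ≤ 1 - b₁ := le_trans (min_le_left _ _) (min_le_right _ _)
  have hεa₂ : ε ≤ a₂ := le_trans (min_le_right _ _) (min_le_left _ _)
  have hεb₂ : ε ≤ 1 - b₂ := le_trans (min_le_right _ _) (min_le_right _ _)
  have hε0 : 0 < ε :=
    lt_min (lt_min ha₁pos (by linarith)) (lt_min ha₂pos (by linarith))
  have hε1 : ε < 1 := lt_of_le_of_lt hεa₁ ha₁lt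
  refine ⟨ε, hε0, hε1, ?_⟩
  intro S hScard
  have ht : ∀ i, ε ≤ ((A * Υ₁ * Aᴴ) i i).re ∧ ((A * Υ₁ * Aᴴ) i i).re ≤ 1 - ε := fun i =>
    diag_conj_re_bounds Υ₁ hΥ₁ A hAmem i
      (fun k => le_trans hεa₁ (Finset.inf'_le _ (Finset.mem_univ k)))
      (fun k => le_trans (Finset.le_sup' _ (Finset.mem_univ k)) (by linarith))
  have hs : ∀ i, ε ≤ ((A * Υ₂ * Aᴴ) i i).re ∧ ((A * Υ₂ * Aᴴ) i i).re ≤ 1 - ε := fun i =>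
    diag_conj_re_bounds Υ₂ hΥ₂ A hAmem i
      (fun k => le_trans hεa₂ (Finset.inf'_le _ (Finset.mem_univ k)))
      (fun k => le_trans (Finset.le_sup' _ (Finset.mem_univ k)) (by linarith))
  have htr₁ : (Υ₁ * C).trace.re = ∑ i, ((A * Υ₁ * Aᴴ) i i).re * μ i := by
    rw [hCeq]; exact trace_re_eq_aux Υ₁ A μ
  have htr₂ : (Υ₂ * C).trace.re = ∑ i, ((A * Υ₂ * Aᴴ) i i).re * μ i := by
    rw [hCeq]; exact trace_re_eq_aux Υ₂ A μ
  have hlow := sorted_sum_le_aux μ hμmono hqm S hScard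
  have hw₁ : ε * (∑ j ∈ Finset.univ.filter (fun j : Fin m => 0 < μ j), μ j)
        - (1 - ε) * (∑ j ∈ Finset.univ.filter (fun j : Fin m => μ j < 0), -μ j)
      ≤ ∑ i, ((A * Υ₁ * Aᴴ) i i).re * μ i :=
    (weighted_sum_bounds μ (fun i => ((A * Υ₁ * Aᴴ) i i).re) ε
      (fun i => (ht i).1) (fun i => (ht i).2)).1
  constructor
  · linarith [htr₁ ▸ hcomp₁]
  · have hc : Sᶜ.card = m - q := by
      rw [Finset.card_compl, hScard, Fintype.card_fin]
    have hup := sorted_sum_le_aux μ hμmono (Nat.sub_le m q) Sᶜ hc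
    have hsum : ∑ j ∈ S, μ j + ∑ j ∈ Sᶜ, μ j = ∑ j, μ j := Finset.sum_add_sum_compl S μ
    have hw₂ : ∑ i, (1 - ((A * Υ₂ * Aᴴ) i i).re) * μ i
        ≤ (1 - ε) * (∑ j ∈ Finset.univ.filter (fun j : Fin m => 0 < μ j), μ j)
          - ε * (∑ j ∈ Finset.univ.filter (fun j : Fin m => μ j < 0), -μ j) :=
      (weighted_sum_bounds μ (fun i => 1 - ((A * Υ₂ * Aᴴ) i i).re) ε
        (fun i => by linarith [(hs i).2]) (fun i => by linarith [(hs i).1])).2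
    have hsub : ∑ i, (1 - ((A * Υ₂ * Aᴴ) i i).re) * μ i
        = ∑ i, μ i - ∑ i, ((A * Υ₂ * Aᴴ) i i).re * μ i := by
      rw [← Finset.sum_sub_distrib]
      congr 1; ext i; ring
    linarith [htr₂ ▸ hcomp₂]
end
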